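/- arXiv:1803.04018 — 2 statements merged into one kernel-verified Lean document; each statement's English description precedes it below -/
import Mathlib

section
/- Let W = ⊕_{n∈ℕ} 𝕂 and let β : W → W be the right Bernoulli shift β(x_0, x_1, x_2, …) = (0, x_0, x_1, …). Then (W,β) has completely positive algebraic entropy: every nonzero β-invariant 𝕂-subspace Z of W satisfies ent(Z, β|_Z) > 0. -/
open scoped ENNReal

/-- A topological `𝕂`-vector space `V` is *linearly compact* if it is Hausdorff, has a
neighbourhood basis at `0` consisting of open `𝕂`-subspaces, and every family of closed
affine subspaces (cosets of closed `𝕂`-subspaces) with the finite intersection property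
has nonempty intersection. -/
def IsLinearlyCompact (𝕂 V : Type*) [Field 𝕂] [AddCommGroup V] [Module 𝕂 V]
    [TopologicalSpace V] : Prop :=
  T2Space V ∧
  (∀ S ∈ nhds (0 : V), ∃ U : Submodule 𝕂 V, IsOpen (U : Set V) ∧ (U : Set V) ⊆ S) ∧
  ∀ (ι : Type) (N : ι → Submodule 𝕂 V) (v : ι → V),
    (∀ i, IsClosed ((N i : Set V))) →
    (∀ F : Finset ι, (⋂ i ∈ F, ((v i + ·) '' (N i : Set V))).Nonempty) →
    (⋂ i, ((v i + ·) '' (N i : Set V))).Nonempty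

/-- A family of proper `𝕂`-subspaces `N i` of `V` is *coindependent* if for every finite
set `F` of indices and every `i ∈ F`, `N i + ⋂_{j ∈ F, j ≠ i} N j = V`. -/
def Coindependent (𝕂 : Type*) {V ι : Type*} [Field 𝕂] [AddCommGroup V] [Module 𝕂 V]
    (N : ι → Submodule 𝕂 V) : Prop :=
  ∀ (F : Finset ι) (i : ι), i ∈ F → N i ⊔ (⨅ j ∈ F, ⨅ _ : j ≠ i, N j) = ⊤

/-- `Tn ψ F n = F + ψF + ⋯ + ψⁿ⁻¹F`. -/
noncomputable def Tn {𝕂 W : Type*} [Field 𝕂] [AddCommGroup W] [Module 𝕂 W]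
    (ψ : W →ₗ[𝕂] W) (F : Submodule 𝕂 W) (n : ℕ) : Submodule 𝕂 W :=
  ⨆ k ∈ Finset.range n, Submodule.map (ψ ^ k) F

/-- `H(ψ,F) = lim_{n→∞} (1/n)·dim_𝕂 ((F + ψF + ⋯ + ψⁿ⁻¹F)/F)`, realized as a limsup in
`ℝ≥0∞` (the limit exists, so it coincides with the limsup). -/
noncomputable def HAlg {𝕂 W : Type*} [Field 𝕂] [AddCommGroup W] [Module 𝕂 W]
    (ψ : W →ₗ[𝕂] W) (F : Submodule 𝕂 W) : ℝ≥0∞ :=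
  Filter.atTop.limsup fun n : ℕ =>
    (((Module.rank 𝕂 (↥(Tn ψ F n) ⧸ Submodule.comap (Tn ψ F n).subtype F)).toENat : ℕ∞) :
      ℝ≥0∞) / (n : ℝ≥0∞)

/-- The algebraic entropy `ent(W,ψ) = sup_F H(ψ,F)`, the supremum ranging over all
finite-dimensional `𝕂`-subspaces `F` of `W`. -/
noncomputable def entAlg (𝕂 W : Type*) [Field 𝕂] [AddCommGroup W] [Module 𝕂 W]
    (ψ : W →ₗ[𝕂] W) : ℝ≥0∞ :=
  ⨆ (F : Submodule 𝕂 W) (_ : FiniteDimensional 𝕂 ↥F), HAlg ψ F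

/-- An algebraic flow `(W,ψ)` has *completely positive algebraic entropy* if
`ent(Z, ψ|_Z) ≠ 0` for every nonzero `ψ`-invariant `𝕂`-subspace `Z` of `W`. -/
def CompletelyPositiveEntAlg (𝕂 W : Type*) [Field 𝕂] [AddCommGroup W] [Module 𝕂 W]
    (ψ : W →ₗ[𝕂] W) : Prop :=
  ∀ (Z : Submodule 𝕂 W) (hinv : ∀ x ∈ Z, ψ x ∈ Z), Z ≠ ⊥ →
    entAlg 𝕂 ↥Z (ψ.restrict hinv) ≠ 0


open scoped ENNReal

private lemma shift_pow_apply {𝕂 : Type*} [Field 𝕂] (β : (ℕ →₀ 𝕂) →ₗ[𝕂] (ℕ →₀ 𝕂))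
    (hβ : ∀ x : ℕ →₀ 𝕂, β x 0 = 0 ∧ ∀ n : ℕ, β x (n + 1) = x n)
    (x : ℕ →₀ 𝕂) : ∀ (k i : ℕ), ((β ^ k) x) i = if k ≤ i then x (i - k) else 0 := by
  intro k
  induction k with
  | zero => intro i; simp
  | succ k ih =>
    intro i
    have h1 : (β ^ (k + 1)) x = β ((β ^ k) x) := by
      rw [pow_succ']; rfl
    rw [h1]
    cases i with
    | zero => simp [(hβ _).1]
    | succ n =>
      rw [(hβ _).2 n, ih n]
      by_cases h : k ≤ n
      · simp [h, Nat.succ_le_succ h, Nat.succ_sub_succ]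
      · simp [h, fun hc => h (Nat.succ_le_succ_iff.mp hc)]

private lemma shift_li {𝕂 : Type*} [Field 𝕂] (β : (ℕ →₀ 𝕂) →ₗ[𝕂] (ℕ →₀ 𝕂))
    (hβ : ∀ x : ℕ →₀ 𝕂, β x 0 = 0 ∧ ∀ n : ℕ, β x (n + 1) = x n)
    (x : ℕ →₀ 𝕂) (hx : x ≠ 0) :
    LinearIndependent 𝕂 (fun k : ℕ => (β ^ k) x) := by
  have hsupp : x.support.Nonempty := Finsupp.support_nonempty_iff.mpr hx
  set m := x.support.min' hsupp with hm
  have hxm : x m ≠ 0 := Finsupp.mem_support_iff.mp (x.support.min'_mem hsupp)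
  have hlow : ∀ j, j < m → x j = 0 := by
    intro j hj
    by_contra h
    exact absurd (x.support.min'_le j (Finsupp.mem_support_iff.mpr h)) (not_le.mpr hj)
  rw [linearIndependent_iff']
  intro s
  induction s using Finset.strongInduction with
  | _ s ih =>
    intro g hsum i hi
    have hne : s.Nonempty := ⟨i, hi⟩
    set k := s.min' hne with hk
    have hkmem : k ∈ s := s.min'_mem hne
    have hgk : g k = 0 := by
      have hev := congrArg (fun f : ℕ →₀ 𝕂 => f (m + k)) hsum
      simp only [Finsupp.finset_sum_apply, Finsupp.smul_apply, smul_eq_mul,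
        Finsupp.coe_zero, Pi.zero_apply] at hev
      have hsingle : ∑ j ∈ s, g j * ((β ^ j) x) (m + k) = g k * x m := by
        rw [Finset.sum_eq_single k]
        · rw [shift_pow_apply β hβ, if_pos (Nat.le_add_left k m), Nat.add_sub_cancel]
        · intro j hj hjk
          have hjgt : k < j := lt_of_le_of_ne (s.min'_le j hj) (Ne.symm hjk)
          rw [shift_pow_apply β hβ]
          by_cases hle : j ≤ m + k
          · rw [if_pos hle, hlow _ (by omega), mul_zero]
          · rw [if_neg hle, mul_zero]
        · intro h; exact absurd hkmem h
      rw [hsingle] at hev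
      exact (mul_eq_zero.mp hev).resolve_right hxm
    have hsum' : ∑ j ∈ s.erase k, g j • (β ^ j) x = 0 := by
      rw [Finset.sum_erase _ (by rw [hgk, zero_smul])]
      exact hsum
    by_cases hik : i = k
    · rw [hik]; exact hgk
    · exact ih (s.erase k) (Finset.erase_ssubset hkmem) g hsum' i
        (Finset.mem_erase.mpr ⟨hik, hi⟩)


private lemma entAlg_pos_of_li {𝕂 W : Type*} [Field 𝕂] [AddCommGroup W] [Module 𝕂 W]
    (ψ : W →ₗ[𝕂] W) (z : W)
    (hli : LinearIndependent 𝕂 (fun k : ℕ => (ψ ^ k) z)) :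
    0 < entAlg 𝕂 W ψ := by
  set F : Submodule 𝕂 W := 𝕂 ∙ z with hF
  have hFD : FiniteDimensional 𝕂 ↥F := inferInstance
  have hmem : ∀ n k : ℕ, k < n → (ψ ^ k) z ∈ Tn ψ F n := by
    intro n k hk
    have hle : Submodule.map (ψ ^ k) F ≤ Tn ψ F n :=
      le_iSup₂ (f := fun k (_ : k ∈ Finset.range n) => Submodule.map (ψ ^ k) F) k
        (Finset.mem_range.mpr hk)
    exact hle (Submodule.mem_map_of_mem (Submodule.mem_span_singleton_self z))
  have hrank : ∀ n : ℕ, (n : Cardinal) ≤ Module.rank 𝕂 ↥(Tn ψ F n) := by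
    intro n
    set v : Fin n → ↥(Tn ψ F n) := fun k => ⟨(ψ ^ (k : ℕ)) z, hmem n k k.isLt⟩ with hv
    have hliv : LinearIndependent 𝕂 v := by
      have h0 : LinearIndependent 𝕂 (fun k : Fin n => (ψ ^ (k : ℕ)) z) :=
        hli.comp _ Fin.val_injective
      have h1 : LinearIndependent 𝕂 ((Tn ψ F n).subtype ∘ v) := h0
      exact LinearIndependent.of_comp _ h1
    have := hliv.cardinal_lift_le_rank
    simpa using this
  have hFle : ∀ n : ℕ, 1 ≤ n → F ≤ Tn ψ F n := by
    intro n hn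
    have hle : Submodule.map (ψ ^ 0) F ≤ Tn ψ F n :=
      le_iSup₂ (f := fun k (_ : k ∈ Finset.range n) => Submodule.map (ψ ^ k) F) 0
        (Finset.mem_range.mpr hn)
    simpa [Module.End.one_eq_id, Submodule.map_id] using hle
  have hterm : ∀ n : ℕ, 2 ≤ n →
      (1 : ℝ≥0∞) / 2 ≤
      (((Module.rank 𝕂 (↥(Tn ψ F n) ⧸ Submodule.comap (Tn ψ F n).subtype F)).toENat : ℕ∞) :
        ℝ≥0∞) / (n : ℝ≥0∞) := by
    intro n hn
    set Q := Module.rank 𝕂 (↥(Tn ψ F n) ⧸ Submodule.comap (Tn ψ F n).subtype F) with hQ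
    have hsum := rank_quotient_add_rank_of_divisionRing (Submodule.comap (Tn ψ F n).subtype F)
    have hcom : Module.rank 𝕂 ↥(Submodule.comap (Tn ψ F n).subtype F) ≤ 1 := by
      rw [(Submodule.comapSubtypeEquivOfLe (hFle n (by omega))).rank_eq]
      have := rank_span_le (R := 𝕂) ({z} : Set W)
      simpa using this
    have hQn : (↑(n - 1) : Cardinal) ≤ Q := by
      rcases lt_or_ge Q Cardinal.aleph0 with hfin | hinf
      · obtain ⟨m, hm⟩ := Cardinal.lt_aleph0.mp hfin
        rw [hm, Nat.cast_le]
        have h1 : (n : Cardinal) ≤ (m : Cardinal) + 1 := by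
          calc (n : Cardinal)
              ≤ Q + Module.rank 𝕂 ↥(Submodule.comap (Tn ψ F n).subtype F) := by
                rw [hsum]; exact hrank n
            _ ≤ (m : Cardinal) + 1 := by rw [← hm]; exact add_le_add_right hcom _
        have h2 : (n : Cardinal) ≤ ((m + 1 : ℕ) : Cardinal) := by push_cast; exact h1
        rw [Nat.cast_le] at h2
        omega
      · exact le_trans (le_of_lt (Cardinal.nat_lt_aleph0 _)) hinf
    have hQe : ((n - 1 : ℕ) : ℕ∞) ≤ Q.toENat := Cardinal.natCast_le_toENat_iff.mpr hQn
    have hQr : ((n - 1 : ℕ) : ℝ≥0∞) ≤ ((Q.toENat : ℕ∞) : ℝ≥0∞) := by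
      rw [← ENat.toENNReal_coe]
      exact ENat.toENNReal_le.mpr hQe
    calc (1 : ℝ≥0∞) / 2 ≤ ((n - 1 : ℕ) : ℝ≥0∞) / (n : ℝ≥0∞) := by
          rw [one_div, ENNReal.le_div_iff_mul_le
            (Or.inl (Nat.cast_ne_zero.mpr (by omega)))
            (Or.inl (ENNReal.natCast_ne_top n))]
          have h2 : ((n : ℕ) : ℝ≥0∞) ≤ 2 * ((n - 1 : ℕ) : ℝ≥0∞) := by
            rw [show (2 : ℝ≥0∞) = ((2 : ℕ) : ℝ≥0∞) by norm_cast, ← Nat.cast_mul, Nat.cast_le]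
            omega
          calc (2 : ℝ≥0∞)⁻¹ * (n : ℝ≥0∞) ≤ 2⁻¹ * (2 * ((n - 1 : ℕ) : ℝ≥0∞)) :=
                mul_le_mul_right h2 _
            _ = ((n - 1 : ℕ) : ℝ≥0∞) := by
                rw [← mul_assoc, ENNReal.inv_mul_cancel (by norm_num) (by norm_num), one_mul]
      _ ≤ ((Q.toENat : ℕ∞) : ℝ≥0∞) / (n : ℝ≥0∞) := ENNReal.div_le_div_right hQr _
  have hHA : (1 : ℝ≥0∞) / 2 ≤ HAlg ψ F := by
    apply Filter.le_limsup_of_frequently_le'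
    apply Filter.Eventually.frequently
    filter_upwards [Filter.eventually_ge_atTop 2] with n hn
    exact hterm n hn
  have hent : (1 : ℝ≥0∞) / 2 ≤ entAlg 𝕂 W ψ :=
    le_trans hHA (le_iSup₂ (f := fun (F : Submodule 𝕂 W) (_ : FiniteDimensional 𝕂 ↥F) =>
      HAlg ψ F) F hFD)
  exact lt_of_lt_of_le (by norm_num) hent


/-- Let `W = ⊕_{n ∈ ℕ} 𝕂` and `β : W → W` the right Bernoulli shift
`β(x₀, x₁, x₂, …) = (0, x₀, x₁, …)`.  Then `(W,β)` has completely positive algebraic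
entropy: every nonzero `β`-invariant `𝕂`-subspace `Z` of `W` satisfies `ent(Z, β|_Z) > 0`. -/
theorem stmt_15 {𝕂 : Type*} [Field 𝕂] (β : (ℕ →₀ 𝕂) →ₗ[𝕂] (ℕ →₀ 𝕂))
    (hβ : ∀ x : ℕ →₀ 𝕂, β x 0 = 0 ∧ ∀ n : ℕ, β x (n + 1) = x n) :
    CompletelyPositiveEntAlg 𝕂 (ℕ →₀ 𝕂) β ∧
    ∀ (Z : Submodule 𝕂 (ℕ →₀ 𝕂)) (hZinv : ∀ x ∈ Z, β x ∈ Z), Z ≠ ⊥ →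
      0 < entAlg 𝕂 ↥Z (β.restrict hZinv) := by
  have key : ∀ (Z : Submodule 𝕂 (ℕ →₀ 𝕂)) (hZinv : ∀ x ∈ Z, β x ∈ Z), Z ≠ ⊥ →
      0 < entAlg 𝕂 ↥Z (β.restrict hZinv) := by
    intro Z hZinv hZne
    obtain ⟨x, hxZ, hx0⟩ := Submodule.exists_mem_ne_zero_of_ne_bot hZne
    set ψ := β.restrict hZinv with hψ
    have hcomm : ∀ (k : ℕ) (w : ↥Z), (((ψ ^ k) w : ↥Z) : ℕ →₀ 𝕂) = (β ^ k) (w : ℕ →₀ 𝕂) := by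
      intro k
      induction k with
      | zero => intro w; simp
      | succ k ih =>
        intro w
        rw [pow_succ, Module.End.mul_apply, pow_succ, Module.End.mul_apply, ih (ψ w)]
        rfl
    apply entAlg_pos_of_li ψ (⟨x, hxZ⟩ : ↥Z)
    have h0 := shift_li β hβ x hx0
    have h1 : LinearIndependent 𝕂 (Z.subtype ∘ fun k : ℕ => (ψ ^ k) (⟨x, hxZ⟩ : ↥Z)) := by
      convert h0 using 1
      funext k
      exact hcomm k ⟨x, hxZ⟩
    exact LinearIndependent.of_comp _ h1
  exact ⟨fun Z hinv hne => (key Z hinv hne).ne', key⟩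
end

section
/- Let (W,ψ) be an algebraic flow. Then ent(W,ψ) = ent*(Ŵ, ψ̂), where (Ŵ, ψ̂) is the Lefschetz dual flow of (W,ψ): Ŵ = Hom_𝕂(W,𝕂) endowed with the topology of pointwise convergence (a linearly compact 𝕂-space) and ψ̂(χ) = χ ∘ ψ. -/
open scoped ENNReal

/-- `Cn φ U n = U ∩ φ⁻¹U ∩ ⋯ ∩ φ⁻⁽ⁿ⁻¹⁾U`. -/
noncomputable def Cn {𝕂 V : Type*} [Field 𝕂] [AddCommGroup V] [Module 𝕂 V]
    (φ : V →ₗ[𝕂] V) (U : Submodule 𝕂 V) (n : ℕ) : Submodule 𝕂 V :=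
  ⨅ k ∈ Finset.range n, Submodule.comap (φ ^ k) U

/-- The `φ`-cotrajectory `C(φ,U) = ⋂_{n ∈ ℕ} φ⁻ⁿU = ⋂_{n ≥ 1} C_n(φ,U)`. -/
noncomputable def Cotraj {𝕂 V : Type*} [Field 𝕂] [AddCommGroup V] [Module 𝕂 V]
    (φ : V →ₗ[𝕂] V) (U : Submodule 𝕂 V) : Submodule 𝕂 V :=
  ⨅ k : ℕ, Submodule.comap (φ ^ k) U

/-- `H*(φ,U) = lim_{n→∞} (1/n)·dim_𝕂 (U / C_n(φ,U))`, realized as a limsup in `ℝ≥0∞`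
(the limit exists, so it coincides with the limsup). -/
noncomputable def HStar {𝕂 V : Type*} [Field 𝕂] [AddCommGroup V] [Module 𝕂 V]
    (φ : V →ₗ[𝕂] V) (U : Submodule 𝕂 V) : ℝ≥0∞ :=
  Filter.atTop.limsup fun n : ℕ =>
    (((Module.rank 𝕂 (↥U ⧸ Submodule.comap U.subtype (Cn φ U n))).toENat : ℕ∞) : ℝ≥0∞) /
      (n : ℝ≥0∞)

/-- The topological entropy `ent*(V,φ) = sup_U H*(φ,U)`, the supremum ranging over all
open `𝕂`-subspaces `U` of `V`. -/
noncomputable def entStar (𝕂 V : Type*) [Field 𝕂] [AddCommGroup V] [Module 𝕂 V]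
    [TopologicalSpace V] (φ : V →ₗ[𝕂] V) : ℝ≥0∞ :=
  ⨆ (U : Submodule 𝕂 V) (_ : IsOpen (U : Set V)), HStar φ U

/-- The topology of pointwise convergence on the Lefschetz dual
`Ŵ = Hom_𝕂(W,𝕂)` of a discrete `𝕂`-vector space `W` (`𝕂` discrete). -/
noncomputable def dualTopology (𝕂 W : Type*) [Field 𝕂] [TopologicalSpace 𝕂]
    [AddCommGroup W] [Module 𝕂 W] : TopologicalSpace (W →ₗ[𝕂] 𝕂) :=
  TopologicalSpace.induced (fun χ => (χ : W → 𝕂)) Pi.topologicalSpace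

@[reducible] def instACGDualLin {𝕂 W : Type*} [Field 𝕂] [AddCommGroup W] [Module 𝕂 W] :
    AddCommGroup (W →ₗ[𝕂] 𝕂) := LinearMap.addCommGroup

section Aux

attribute [local instance] instACGDualLin

open Submodule LinearMap Module Filter

variable {𝕂 W : Type*} [Field 𝕂] [AddCommGroup W] [Module 𝕂 W]

/-- The dual annihilator, with ambient type spelled `W →ₗ[𝕂] 𝕂`. -/
noncomputable def ann (F : Submodule 𝕂 W) : Submodule 𝕂 (W →ₗ[𝕂] 𝕂) := F.dualAnnihilator

lemma mem_ann {F : Submodule 𝕂 W} {χ : W →ₗ[𝕂] 𝕂} : χ ∈ ann F ↔ ∀ w ∈ F, χ w = 0 :=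
  Submodule.mem_dualAnnihilator χ

lemma ann_anti {F G : Submodule 𝕂 W} (h : F ≤ G) : ann G ≤ ann F := by
  intro χ hχ
  rw [mem_ann] at hχ ⊢
  exact fun w hw => hχ w (h hw)

lemma dualMap_pow (ψ : W →ₗ[𝕂] W) (k : ℕ) :
    (LinearMap.dualMap ψ) ^ k = LinearMap.dualMap (ψ ^ k) := by
  induction k with
  | zero => simp [Module.End.one_eq_id, LinearMap.dualMap_id]
  | succ k ih =>
    rw [pow_succ, ih, Module.End.mul_eq_comp, LinearMap.dualMap_comp_dualMap,
      ← Module.End.mul_eq_comp, ← pow_succ']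

lemma comap_dualMap_ann (ψ : W →ₗ[𝕂] W) (F : Submodule 𝕂 W) :
    Submodule.comap ψ.dualMap (ann F) = ann (F.map ψ) := by
  ext χ
  simp only [Submodule.mem_comap, mem_ann, Submodule.mem_map, LinearMap.dualMap_apply']
  constructor
  · rintro h _ ⟨w, hw, rfl⟩
    exact h w hw
  · intro h w hw
    exact h (ψ w) ⟨w, hw, rfl⟩

lemma ann_def (F : Submodule 𝕂 W) : ann F = F.dualAnnihilator := rfl

lemma Cn_dual (ψ : W →ₗ[𝕂] W) (F : Submodule 𝕂 W) (n : ℕ) :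
    Cn ψ.dualMap (ann F) n = ann (Tn ψ F n) := by
  rw [Tn, Cn]
  simp only [ann_def]
  rw [Submodule.dualAnnihilator_iSup_eq]
  refine iInf_congr fun k => ?_
  rw [Submodule.dualAnnihilator_iSup_eq]
  refine iInf_congr fun hk => ?_
  rw [dualMap_pow]
  have h := comap_dualMap_ann (ψ ^ k) F
  rw [ann_def, ann_def] at h
  exact h

noncomputable def quotAnnEquiv (G : Submodule 𝕂 W) :
    ((W →ₗ[𝕂] 𝕂) ⧸ ann G) ≃ₗ[𝕂] Module.Dual 𝕂 ↥G :=
  Subspace.quotAnnihilatorEquiv G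

lemma fd_quot_ann (G : Submodule 𝕂 W) [FiniteDimensional 𝕂 G] :
    FiniteDimensional 𝕂 ((W →ₗ[𝕂] 𝕂) ⧸ ann G) :=
  LinearEquiv.finiteDimensional (quotAnnEquiv G).symm

lemma finrank_quot_ann (G : Submodule 𝕂 W) :
    finrank 𝕂 ((W →ₗ[𝕂] 𝕂) ⧸ ann G) = finrank 𝕂 G := by
  rw [(quotAnnEquiv G).finrank_eq, Subspace.dual_finrank_eq]

/-- the natural equiv of `F^⊥ ⧸ G^⊥` with a submodule of `D ⧸ G^⊥` -/
noncomputable def annQuotEquiv (F G : Submodule 𝕂 W) :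
    (↥(ann F) ⧸ Submodule.comap (ann F).subtype (ann G)) ≃ₗ[𝕂]
      LinearMap.range (((ann G).mkQ).comp (ann F).subtype) := by
  refine (Submodule.quotEquivOfEq _ _ ?_).trans
    (((ann G).mkQ).comp (ann F).subtype).quotKerEquivRange
  rw [LinearMap.ker_comp, Submodule.ker_mkQ]

set_option synthInstance.maxHeartbeats 1000000 in
lemma fd_ann_quot (F G : Submodule 𝕂 W) [FiniteDimensional 𝕂 G] :
    FiniteDimensional 𝕂 (↥(ann F) ⧸ Submodule.comap (ann F).subtype (ann G)) := by
  haveI := fd_quot_ann G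
  exact LinearEquiv.finiteDimensional (annQuotEquiv F G).symm

lemma finrank_quot_comap {F G : Submodule 𝕂 W} (hFG : F ≤ G) [FiniteDimensional 𝕂 G] :
    finrank 𝕂 (↥G ⧸ Submodule.comap G.subtype F) + finrank 𝕂 F = finrank 𝕂 G := by
  rw [← (Submodule.comapSubtypeEquivOfLe hFG).finrank_eq]
  exact Submodule.finrank_quotient_add_finrank _

lemma finrank_ann_quot {F G : Submodule 𝕂 W} (hFG : F ≤ G) [FiniteDimensional 𝕂 G] :
    finrank 𝕂 (↥(ann F) ⧸ Submodule.comap (ann F).subtype (ann G))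
      = finrank 𝕂 (↥G ⧸ Submodule.comap G.subtype F) := by
  haveI := fd_quot_ann G
  have hrange : LinearMap.range (((ann G).mkQ).comp (ann F).subtype)
      = Submodule.map (ann G).mkQ (ann F) := by
    rw [LinearMap.range_comp, Submodule.range_subtype]
  have e2 : (((W →ₗ[𝕂] 𝕂) ⧸ ann G) ⧸ Submodule.map (ann G).mkQ (ann F))
      ≃ₗ[𝕂] (W →ₗ[𝕂] 𝕂) ⧸ ann F :=
    Submodule.quotientQuotientEquivQuotient _ _ (ann_anti hFG)
  have h1 := Submodule.finrank_quotient_add_finrank (Submodule.map (ann G).mkQ (ann F))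
  rw [e2.finrank_eq, finrank_quot_ann, finrank_quot_ann] at h1
  have h2 : finrank 𝕂 (↥(ann F) ⧸ Submodule.comap (ann F).subtype (ann G))
      = finrank 𝕂 (Submodule.map (ann G).mkQ (ann F)) := by
    rw [(annQuotEquiv F G).finrank_eq, hrange]
  have h3 := finrank_quot_comap hFG
  omega

end Aux
section Aux2

attribute [local instance] instACGDualLin

open Submodule LinearMap Module Filter

variable {𝕂 W : Type*} [Field 𝕂] [AddCommGroup W] [Module 𝕂 W]

lemma Tn_fd (ψ : W →ₗ[𝕂] W) (F : Submodule 𝕂 W) [FiniteDimensional 𝕂 F] (n : ℕ) :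
    FiniteDimensional 𝕂 (Tn ψ F n) := by
  rw [Tn, iSup_subtype']
  infer_instance

lemma le_Tn (ψ : W →ₗ[𝕂] W) (F : Submodule 𝕂 W) {n : ℕ} (hn : 1 ≤ n) :
    F ≤ Tn ψ F n := by
  have h0 : Submodule.map (ψ ^ 0) F = F := by
    rw [pow_zero, Module.End.one_eq_id, Submodule.map_id]
  calc F = Submodule.map (ψ ^ 0) F := h0.symm
    _ ≤ Tn ψ F n := le_iSup₂ (f := fun k (_ : k ∈ Finset.range n) => Submodule.map (ψ ^ k) F)
        0 (Finset.mem_range.mpr hn)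

lemma toENat_rank_eq_of_fd {M N : Type*} [AddCommGroup M] [Module 𝕂 M]
    [AddCommGroup N] [Module 𝕂 N] [FiniteDimensional 𝕂 M] [FiniteDimensional 𝕂 N]
    (h : finrank 𝕂 M = finrank 𝕂 N) :
    (Module.rank 𝕂 M).toENat = (Module.rank 𝕂 N).toENat := by
  rw [← Module.finrank_eq_rank, ← Module.finrank_eq_rank, h]
  simp [Cardinal.toENat_nat]

lemma HAlg_eq_HStar (ψ : W →ₗ[𝕂] W) (F : Submodule 𝕂 W) [FiniteDimensional 𝕂 F] :
    HAlg ψ F = HStar ψ.dualMap (ann F) := by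
  rw [HAlg, HStar]
  refine Filter.limsup_congr ?_
  filter_upwards [Filter.eventually_ge_atTop 1] with n hn
  congr 2
  haveI := Tn_fd ψ F n
  haveI := fd_ann_quot F (Tn ψ F n)
  rw [Cn_dual]
  exact (toENat_rank_eq_of_fd (finrank_ann_quot (le_Tn ψ F hn))).symm

end Aux2
section Aux3

attribute [local instance] instACGDualLin

open Submodule LinearMap Module Filter Topology

variable {𝕂 W : Type*} [Field 𝕂] [AddCommGroup W] [Module 𝕂 W]
variable [TopologicalSpace 𝕂] [DiscreteTopology 𝕂]

lemma ann_isOpen (F : Submodule 𝕂 W) [FiniteDimensional 𝕂 F] :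
    @IsOpen _ (dualTopology 𝕂 W) ((ann F : Submodule 𝕂 (W →ₗ[𝕂] 𝕂)) : Set (W →ₗ[𝕂] 𝕂)) := by
  letI := dualTopology 𝕂 W
  obtain ⟨s, hs⟩ : F.FG := (Submodule.fg_top F).mp (Module.finite_def.mp inferInstance)
  have hset : ((ann F : Submodule 𝕂 (W →ₗ[𝕂] 𝕂)) : Set (W →ₗ[𝕂] 𝕂))
      = ⋂ x ∈ s, {χ : W →ₗ[𝕂] 𝕂 | χ x = 0} := by
    ext χ
    simp only [SetLike.mem_coe, mem_ann, Set.mem_iInter, Set.mem_setOf_eq]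
    constructor
    · intro h x hx
      exact h x (hs ▸ Submodule.subset_span hx)
    · intro h w hw
      rw [← hs] at hw
      have : Submodule.span 𝕂 ↑s ≤ LinearMap.ker χ :=
        Submodule.span_le.mpr fun x hx => LinearMap.mem_ker.mpr (h x hx)
      exact this hw
  rw [hset]
  refine isOpen_biInter_finset fun x _ => ?_
  have hc : Continuous fun χ : W →ₗ[𝕂] 𝕂 => χ x :=
    (continuous_apply x).comp continuous_induced_dom
  exact IsOpen.preimage hc (isOpen_discrete ({0} : Set 𝕂))

lemma exists_ann_le {U : Submodule 𝕂 (W →ₗ[𝕂] 𝕂)}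
    (hU : @IsOpen _ (dualTopology 𝕂 W) (U : Set (W →ₗ[𝕂] 𝕂))) :
    ∃ F : Submodule 𝕂 W, FiniteDimensional 𝕂 F ∧ ann F ≤ U := by
  letI := dualTopology 𝕂 W
  have h0 : (U : Set (W →ₗ[𝕂] 𝕂)) ∈ 𝓝 (0 : W →ₗ[𝕂] 𝕂) := hU.mem_nhds U.zero_mem
  rw [show 𝓝 (0 : W →ₗ[𝕂] 𝕂) = Filter.comap (fun χ : W →ₗ[𝕂] 𝕂 => (χ : W → 𝕂))
      (𝓝 ((0 : W →ₗ[𝕂] 𝕂) : W → 𝕂)) from nhds_induced _ 0, Filter.mem_comap] at h0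
  obtain ⟨S, hS, hSU⟩ := h0
  have : ((0 : W →ₗ[𝕂] 𝕂) : W → 𝕂) = (0 : W → 𝕂) := rfl
  rw [this, nhds_pi, Filter.mem_pi] at hS
  obtain ⟨I, hIfin, t, ht, htS⟩ := hS
  refine ⟨Submodule.span 𝕂 I, FiniteDimensional.span_of_finite 𝕂 hIfin, ?_⟩
  intro χ hχ
  apply hSU
  have hmem : (χ : W → 𝕂) ∈ I.pi t := by
    intro x hx
    have hx0 : χ x = 0 := (mem_ann.mp hχ) x (Submodule.subset_span hx)
    rw [hx0]
    have := ht x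
    rwa [nhds_discrete, Filter.mem_pure] at this
  exact Set.mem_preimage.mpr (htS hmem)

end Aux3
section Aux4

attribute [local instance] instACGDualLin

open Submodule LinearMap Module Filter Topology
open scoped NNReal

lemma limsup_add_tendsto_zero (u g : ℕ → ℝ≥0∞)
    (hg : Filter.Tendsto g Filter.atTop (𝓝 0)) :
    Filter.atTop.limsup (fun n => u n + g n) ≤ Filter.atTop.limsup u := by
  refine ENNReal.le_of_forall_pos_le_add fun ε hε hLtop => ?_
  have hL' : Filter.atTop.limsup u ≠ ⊤ := hLtop.ne
  have hε2 : (0 : ℝ≥0∞) < ((ε / 2 : ℝ≥0) : ℝ≥0∞) := by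
    rw [ENNReal.coe_pos]
    positivity
  have h1 : ∀ᶠ n in Filter.atTop, u n < Filter.atTop.limsup u + ((ε / 2 : ℝ≥0) : ℝ≥0∞) :=
    Filter.eventually_lt_of_limsup_lt (ENNReal.lt_add_right hL' hε2.ne')
  have h2 : ∀ᶠ n in Filter.atTop, g n < ((ε / 2 : ℝ≥0) : ℝ≥0∞) := hg.eventually_lt_const hε2
  refine Filter.limsup_le_of_le (by isBoundedDefault) ?_
  filter_upwards [h1, h2] with n hn1 hn2
  calc u n + g n ≤ (Filter.atTop.limsup u + ((ε / 2 : ℝ≥0) : ℝ≥0∞)) + ((ε / 2 : ℝ≥0) : ℝ≥0∞) :=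
        add_le_add hn1.le hn2.le
    _ = Filter.atTop.limsup u + ε := by
        rw [add_assoc, ← ENNReal.coe_add, add_halves]

variable {𝕂 : Type*} [Field 𝕂]

lemma Cn_mono {V : Type*} [AddCommGroup V] [Module 𝕂 V] (φ : V →ₗ[𝕂] V)
    {U' U : Submodule 𝕂 V} (h : U' ≤ U) (n : ℕ) : Cn φ U' n ≤ Cn φ U n := by
  rw [Cn, Cn]
  exact iInf_mono fun k => iInf_mono fun _ => Submodule.comap_mono h

variable {W : Type*} [AddCommGroup W] [Module 𝕂 W]

noncomputable def quotCompEquivU (U C : Submodule 𝕂 (W →ₗ[𝕂] 𝕂)) :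
    (↥U ⧸ Submodule.comap U.subtype C) ≃ₗ[𝕂] LinearMap.range ((C.mkQ).comp U.subtype) := by
  refine (Submodule.quotEquivOfEq _ _ ?_).trans ((C.mkQ).comp U.subtype).quotKerEquivRange
  rw [LinearMap.ker_comp, Submodule.ker_mkQ]

set_option synthInstance.maxHeartbeats 1000000 in
set_option maxHeartbeats 1000000 in
lemma HStar_le_of_ann_le (ψ : W →ₗ[𝕂] W) (F : Submodule 𝕂 W) [FiniteDimensional 𝕂 F]
    {U : Submodule 𝕂 (W →ₗ[𝕂] 𝕂)} (hle : ann F ≤ U) :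
    HStar ψ.dualMap U ≤ HStar ψ.dualMap (ann F) := by
  have key : ∀ n : ℕ, 1 ≤ n →
      (Module.rank 𝕂 (↥U ⧸ Submodule.comap U.subtype (Cn ψ.dualMap U n))).toENat
        ≤ (Module.rank 𝕂 (↥(ann F) ⧸ Submodule.comap (ann F).subtype
            (Cn ψ.dualMap (ann F) n))).toENat + ((finrank 𝕂 F : ℕ) : ℕ∞) := by
    intro n hn
    haveI := Tn_fd ψ F n
    haveI := fd_quot_ann (Tn ψ F n)
    haveI := fd_ann_quot F (Tn ψ F n)
    have hC' : Cn ψ.dualMap (ann F) n = ann (Tn ψ F n) := Cn_dual ψ F n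
    have h1 : Module.rank 𝕂 (↥U ⧸ Submodule.comap U.subtype (Cn ψ.dualMap U n))
        ≤ Module.rank 𝕂 ((W →ₗ[𝕂] 𝕂) ⧸ ann (Tn ψ F n)) := by
      have hCC : Cn ψ.dualMap (ann F) n ≤ Cn ψ.dualMap U n := Cn_mono ψ.dualMap hle n
      have hsub : Submodule.comap U.subtype (Cn ψ.dualMap (ann F) n)
          ≤ Submodule.comap U.subtype (Cn ψ.dualMap U n) := Submodule.comap_mono hCC
      have hs : Module.rank 𝕂 (↥U ⧸ Submodule.comap U.subtype (Cn ψ.dualMap U n))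
          ≤ Module.rank 𝕂 (↥U ⧸ Submodule.comap U.subtype (Cn ψ.dualMap (ann F) n)) := by
        refine LinearMap.rank_le_of_surjective
          (Submodule.mapQ _ _ LinearMap.id (by simpa using hsub)) ?_
        intro y
        obtain ⟨x, rfl⟩ := Submodule.Quotient.mk_surjective _ y
        exact ⟨Submodule.Quotient.mk x, by simp [Submodule.mapQ_apply]⟩
      refine hs.trans ?_
      rw [hC']
      calc Module.rank 𝕂 (↥U ⧸ Submodule.comap U.subtype (ann (Tn ψ F n)))
          = Module.rank 𝕂 (LinearMap.range (((ann (Tn ψ F n)).mkQ).comp U.subtype)) :=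
            (quotCompEquivU U (ann (Tn ψ F n))).rank_eq
        _ ≤ Module.rank 𝕂 ((W →ₗ[𝕂] 𝕂) ⧸ ann (Tn ψ F n)) := Submodule.rank_le _
    have h2 : (Module.rank 𝕂 ((W →ₗ[𝕂] 𝕂) ⧸ ann (Tn ψ F n))).toENat
        = ((finrank 𝕂 (Tn ψ F n) : ℕ) : ℕ∞) := by
      rw [← Module.finrank_eq_rank, finrank_quot_ann]
      simp [Cardinal.toENat_nat]
    have h3 : (Module.rank 𝕂 (↥(ann F) ⧸ Submodule.comap (ann F).subtype
          (Cn ψ.dualMap (ann F) n))).toENat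
        = ((finrank 𝕂 (↥(Tn ψ F n) ⧸ Submodule.comap (Tn ψ F n).subtype F) : ℕ) : ℕ∞) := by
      rw [hC', ← Module.finrank_eq_rank, finrank_ann_quot (le_Tn ψ F hn)]
      simp [Cardinal.toENat_nat]
    have h4 := finrank_quot_comap (le_Tn ψ F hn)
    calc (Module.rank 𝕂 (↥U ⧸ Submodule.comap U.subtype (Cn ψ.dualMap U n))).toENat
        ≤ (Module.rank 𝕂 ((W →ₗ[𝕂] 𝕂) ⧸ ann (Tn ψ F n))).toENat :=
          Cardinal.toENat.monotone' h1
      _ = ((finrank 𝕂 (Tn ψ F n) : ℕ) : ℕ∞) := h2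
      _ = ((finrank 𝕂 (↥(Tn ψ F n) ⧸ Submodule.comap (Tn ψ F n).subtype F) : ℕ) : ℕ∞)
            + ((finrank 𝕂 F : ℕ) : ℕ∞) := by
          rw [← h4]
          push_cast
          ring
      _ = (Module.rank 𝕂 (↥(ann F) ⧸ Submodule.comap (ann F).subtype
            (Cn ψ.dualMap (ann F) n))).toENat + ((finrank 𝕂 F : ℕ) : ℕ∞) := by rw [h3]
  rw [HStar, HStar]
  have step1 : Filter.atTop.limsup (fun n : ℕ =>
        (((Module.rank 𝕂 (↥U ⧸ Submodule.comap U.subtype (Cn ψ.dualMap U n))).toENat : ℕ∞)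
          : ℝ≥0∞) / (n : ℝ≥0∞))
      ≤ Filter.atTop.limsup (fun n : ℕ =>
        (((Module.rank 𝕂 (↥(ann F) ⧸ Submodule.comap (ann F).subtype
            (Cn ψ.dualMap (ann F) n))).toENat : ℕ∞) : ℝ≥0∞) / (n : ℝ≥0∞)
          + ((finrank 𝕂 F : ℝ≥0∞) / (n : ℝ≥0∞))) := by
    refine Filter.limsup_le_limsup ?_ (by isBoundedDefault) (by isBoundedDefault)
    filter_upwards [Filter.eventually_ge_atTop 1] with n hn
    have hkey := key n hn
    have : (((Module.rank 𝕂 (↥U ⧸ Submodule.comap U.subtype (Cn ψ.dualMap U n))).toENat : ℕ∞)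
        : ℝ≥0∞)
        ≤ (((Module.rank 𝕂 (↥(ann F) ⧸ Submodule.comap (ann F).subtype
            (Cn ψ.dualMap (ann F) n))).toENat : ℕ∞) : ℝ≥0∞) + (finrank 𝕂 F : ℝ≥0∞) := by
      calc _ ≤ ((((Module.rank 𝕂 (↥(ann F) ⧸ Submodule.comap (ann F).subtype
            (Cn ψ.dualMap (ann F) n))).toENat + ((finrank 𝕂 F : ℕ) : ℕ∞)) : ℕ∞) : ℝ≥0∞) :=
            ENat.toENNReal_le.mpr hkey
        _ = _ := by rw [ENat.toENNReal_add]; norm_cast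
    calc (((Module.rank 𝕂 (↥U ⧸ Submodule.comap U.subtype (Cn ψ.dualMap U n))).toENat : ℕ∞)
          : ℝ≥0∞) / (n : ℝ≥0∞)
        ≤ ((((Module.rank 𝕂 (↥(ann F) ⧸ Submodule.comap (ann F).subtype
            (Cn ψ.dualMap (ann F) n))).toENat : ℕ∞) : ℝ≥0∞) + (finrank 𝕂 F : ℝ≥0∞))
            / (n : ℝ≥0∞) := ENNReal.div_le_div_right this _
      _ = _ := ENNReal.add_div
  refine step1.trans ?_
  refine limsup_add_tendsto_zero _ _ ?_
  have hc : (finrank 𝕂 F : ℝ≥0∞) ≠ ⊤ := ENNReal.natCast_ne_top _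
  have := ENNReal.Tendsto.const_mul (b := 0) (a := (finrank 𝕂 F : ℝ≥0∞))
    ENNReal.tendsto_inv_nat_nhds_zero (Or.inr hc)
  simp only [mul_zero] at this
  simpa [ENNReal.div_eq_inv_mul, mul_comm] using this

end Aux4
/-- **Bridge Theorem.** Let `(W,ψ)` be an algebraic flow.  Then
`ent(W,ψ) = ent*(Ŵ,ψ̂)`, where `Ŵ = Hom_𝕂(W,𝕂)` carries the topology of pointwise
convergence (a linearly compact `𝕂`-space) and `ψ̂(χ) = χ ∘ ψ`. -/
theorem stmt_19 {𝕂 W : Type*} [Field 𝕂] [TopologicalSpace 𝕂] [DiscreteTopology 𝕂]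
    [AddCommGroup W] [Module 𝕂 W] (ψ : W →ₗ[𝕂] W) :
    entAlg 𝕂 W ψ =
      @entStar 𝕂 (W →ₗ[𝕂] 𝕂) _ _ _ (dualTopology 𝕂 W) (LinearMap.dualMap ψ) := by
  apply le_antisymm
  · rw [entAlg, entStar]
    refine iSup₂_le fun F hF => ?_
    haveI := hF
    rw [HAlg_eq_HStar ψ F]
    exact le_iSup_of_le (ann F) (le_iSup_of_le (ann_isOpen F) le_rfl)
  · rw [entAlg, entStar]
    refine iSup₂_le fun U hU => ?_
    obtain ⟨F, hFfd, hle⟩ := exists_ann_le hU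
    haveI := hFfd
    calc HStar (LinearMap.dualMap ψ) U ≤ HStar ψ.dualMap (ann F) := HStar_le_of_ann_le ψ F hle
      _ = HAlg ψ F := (HAlg_eq_HStar ψ F).symm
      _ ≤ _ := le_iSup_of_le F (le_iSup (fun _ : FiniteDimensional 𝕂 ↥F => HAlg ψ F) hFfd)
end
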